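/- Let A be a finite-dimensional commutative ℚ-algebra with unit of dimension n ≥ 3, and let Λ = ℤ[a] be an order generated by a single element a whose powers 1, a, ..., a^{n-1} form a ℤ-basis of Λ. Define L = ℤ-span of {1, a, 2a², 2a³, ..., 2a^{n-1}}. Then L^k = ℤ-span of {1, a, ..., a^k, 2a^{k+1}, ..., 2a^{n-1}} for 1 ≤ k ≤ n-2, and L^{n-1} = Λ; in particular L, L², ..., L^{n-2} are strictly increasing and not invertible. -/

import Mathlib

def IsFullLattice {A : Type*} [CommRing A] [Algebra ℚ A] (L : Submodule ℤ A) : Prop :=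
  L.FG ∧ Submodule.span ℚ (L : Set A) = ⊤

def IsInvLat {A : Type*} [CommRing A] [Algebra ℚ A] (L : Submodule ℤ A) : Prop :=
  ∃ B : Submodule ℤ A, IsFullLattice B ∧ L * B = L / L

/-!
Write `M k` for the ℤ-span of `1, a, …, a^k, 2a^{k+1}, …, 2a^{n-1}`,
so `Λ = M (n-1) = ℤ[a]`. Every product of generators of `M k` and `M 1` other than `a^i · a^j` lies in `2Λ ⊆ M (k+1)`, so
`M k · M 1 = M (k+1)` and hence `L^k = M k`; comparing coordinates in the basis `a^i` shows that
`a^{k+1} ∉ M k`. If `L^k · B = O(L^k) = L^k / L^k` for some `1 ≤ k ≤ n-2`, then with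
`j = n-2` we get `L^j = L^j · O(L^k) = L^{j+k} · B = Λ · B = Λ · O(L^k) = Λ`,
contradicting `a^{n-1} ∉ M (n-2)`.
-/

namespace Submodule

variable {R A : Type*} [CommSemiring R] [CommSemiring A] [Algebra R A]

theorem mul_mul_div_self (I K : Submodule R A) : I * K * (I / I) = I * K := by
  refine le_antisymm ?_ (le_mul_of_one_le_right' (one_le.2 (one_mem_div.2 le_rfl)))
  calc I * K * (I / I) = I / I * I * K := by rw [mul_comm (I / I), mul_right_comm]
    _ ≤ I * K := mul_le_mul_left (le_div_iff_mul_le.1 le_rfl) K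

theorem mul_eq_left_of_le_of_one_mem {Λ S : Submodule R A} (hΛ : Λ * Λ ≤ Λ) (hS : S ≤ Λ)
    (h1 : 1 ∈ S) : Λ * S = Λ :=
  le_antisymm ((mul_le_mul_right hS Λ).trans hΛ) (le_mul_of_one_le_right' (one_le.2 h1))

theorem mul_pow_eq_left_of_le_of_one_mem {Λ S : Submodule R A} (hΛ : Λ * Λ ≤ Λ)
    (hS : S ≤ Λ) (h1 : 1 ∈ S) (m : ℕ) : Λ * S ^ m = Λ := by
  induction m with
  | zero => rw [pow_zero, mul_one]
  | succ m ih => rw [pow_succ, ← mul_assoc, ih, mul_eq_left_of_le_of_one_mem hΛ hS h1]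

end Submodule

open Submodule in
theorem not_isInvLat_pow {A : Type*} [CommRing A] [Algebra ℚ A] {L Λ : Submodule ℤ A}
    {j k : ℕ} (hΛ : Λ * Λ ≤ Λ) (h1 : 1 ∈ L) (hkj : k ≤ j) (htop : L ^ (j + k) = Λ)
    (hne : L ^ j ≠ Λ) : ¬ IsInvLat (L ^ k) := by
  rintro ⟨B, -, hB⟩
  have hLk : L ^ k ≤ Λ := htop ▸ pow_le_pow_right' (one_le.2 h1) (Nat.le_add_left k j)
  have h1k : (1 : A) ∈ L ^ k := one_le.1 (one_le_pow_of_one_le' (one_le.2 h1) k)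
  have hD : L ^ k / L ^ k ≤ Λ := fun x hx => hLk (by simpa using hx 1 h1k)
  have hΛB : Λ * B = Λ := by
    calc Λ * B = Λ * L ^ k * B := by rw [mul_eq_left_of_le_of_one_mem hΛ hLk h1k]
      _ = Λ := by rw [mul_assoc, hB, mul_eq_left_of_le_of_one_mem hΛ hD (one_mem_div.2 le_rfl)]
  obtain ⟨m, rfl⟩ := Nat.exists_eq_add_of_le hkj
  apply hne
  calc L ^ (k + m) = L ^ k * L ^ m * (L ^ k / L ^ k) := by rw [mul_mul_div_self, pow_add]
    _ = L ^ (k + m + k) * B := by rw [← hB, ← pow_add, ← mul_assoc, ← pow_add]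
    _ = Λ := by rw [htop, hΛB]

section EvenTail

variable {A : Type*} [CommRing A] (a : A) (n : ℕ)

def powSpan : Submodule ℤ A :=
  Submodule.span ℤ (Set.range fun i : Fin n => a ^ (i : ℕ))

def evenTailSpan (k : ℕ) : Submodule ℤ A :=
  Submodule.span ℤ (Set.range fun i : Fin n =>
    if (i : ℕ) ≤ k then a ^ (i : ℕ) else 2 * a ^ (i : ℕ))

variable {a n}

theorem pow_mem_powSpan {i : ℕ} (hi : i < n) : a ^ i ∈ powSpan a n :=
  Submodule.subset_span ⟨⟨i, hi⟩, rfl⟩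

theorem pow_mem_evenTailSpan {i k : ℕ} (hi : i < n) (hik : i ≤ k) :
    a ^ i ∈ evenTailSpan a n k :=
  Submodule.subset_span ⟨⟨i, hi⟩, if_pos hik⟩

theorem one_mem_evenTailSpan {k : ℕ} (hn : 0 < n) : 1 ∈ evenTailSpan a n k := by
  simpa using pow_mem_evenTailSpan (a := a) hn (Nat.zero_le k)

theorem two_mul_mem_evenTailSpan {k : ℕ} {x : A} (hx : x ∈ powSpan a n) :
    2 * x ∈ evenTailSpan a n k := by
  suffices powSpan a n ≤ (evenTailSpan a n k).comap (LinearMap.mulLeft ℤ (2 : A)) from this hx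
  refine Submodule.span_le.2 ?_
  rintro _ ⟨i, rfl⟩
  by_cases hik : (i : ℕ) ≤ k
  · simpa [two_mul] using
      add_mem (pow_mem_evenTailSpan i.isLt hik) (pow_mem_evenTailSpan (a := a) i.isLt hik)
  · exact Submodule.subset_span ⟨i, if_neg hik⟩

theorem evenTailSpan_le_powSpan (k : ℕ) : evenTailSpan a n k ≤ powSpan a n := by
  refine Submodule.span_le.2 ?_
  rintro _ ⟨i, rfl⟩
  dsimp only
  split_ifs
  · exact pow_mem_powSpan i.isLt
  · simpa [two_mul] using
      add_mem (pow_mem_powSpan (a := a) i.isLt) (pow_mem_powSpan (a := a) i.isLt)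

theorem evenTailSpan_mono : Monotone (evenTailSpan a n) := by
  intro k l hkl
  refine Submodule.span_le.2 ?_
  rintro _ ⟨i, rfl⟩
  dsimp only
  split_ifs with hik
  · exact pow_mem_evenTailSpan i.isLt (hik.trans hkl)
  · exact two_mul_mem_evenTailSpan (pow_mem_powSpan i.isLt)

theorem evenTailSpan_eq_powSpan_of_le {k : ℕ} (hk : n ≤ k + 1) :
    evenTailSpan a n k = powSpan a n := by
  unfold evenTailSpan powSpan
  congr! with i
  exact if_pos (by omega)

theorem evenTailSpan_mul_evenTailSpan_one (hord : powSpan a n * powSpan a n ≤ powSpan a n)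
    {k : ℕ} (hk : k + 2 ≤ n) :
    evenTailSpan a n k * evenTailSpan a n 1 = evenTailSpan a n (k + 1) := by
  apply le_antisymm
  · rw [evenTailSpan, evenTailSpan, Submodule.span_mul_span, Submodule.span_le]
    rintro _ ⟨_, ⟨i, rfl⟩, _, ⟨j, rfl⟩, rfl⟩
    have hi : (if (i : ℕ) ≤ k then a ^ (i : ℕ) else 2 * a ^ (i : ℕ)) ∈ powSpan a n :=
      evenTailSpan_le_powSpan k (Submodule.subset_span ⟨i, rfl⟩)
    by_cases hj : (j : ℕ) ≤ 1
    · simp only [hj, if_true]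
      split_ifs with hik
      · rw [← pow_add]
        exact pow_mem_evenTailSpan (by omega) (by omega)
      · rw [mul_assoc]
        exact two_mul_mem_evenTailSpan
          (hord (Submodule.mul_mem_mul (pow_mem_powSpan i.isLt) (pow_mem_powSpan j.isLt)))
    · simp only [hj, if_false]
      rw [mul_left_comm]
      exact two_mul_mem_evenTailSpan (hord (Submodule.mul_mem_mul hi (pow_mem_powSpan j.isLt)))
  · refine Submodule.span_le.2 ?_
    rintro _ ⟨i, rfl⟩
    by_cases hi : (i : ℕ) = k + 1
    · simp only [hi, le_rfl, if_true, pow_succ]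
      exact Submodule.mul_mem_mul (pow_mem_evenTailSpan (by omega) le_rfl)
        (by simpa using pow_mem_evenTailSpan (a := a) (n := n) (i := 1) (by omega) le_rfl)
    · simp only [show (i : ℕ) ≤ k + 1 ↔ (i : ℕ) ≤ k by omega]
      refine le_mul_of_one_le_right' (a := evenTailSpan a n k)
        (Submodule.one_le.2 (one_mem_evenTailSpan (by omega))) (Submodule.subset_span ⟨i, rfl⟩)

theorem evenTailSpan_one_pow (hord : powSpan a n * powSpan a n ≤ powSpan a n) {k : ℕ}
    (hk : 1 ≤ k) (hkn : k < n) : evenTailSpan a n 1 ^ k = evenTailSpan a n k := by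
  induction k, hk using Nat.le_induction with
  | base => exact pow_one _
  | succ k hk ih =>
    rw [pow_succ, ih (by omega), evenTailSpan_mul_evenTailSpan_one hord (by omega)]

theorem evenTailSpan_one_pow_eq_powSpan (hord : powSpan a n * powSpan a n ≤ powSpan a n)
    (hn : 2 ≤ n) {m : ℕ} (hm : n - 1 ≤ m) : evenTailSpan a n 1 ^ m = powSpan a n := by
  obtain ⟨m, rfl⟩ := Nat.exists_eq_add_of_le hm
  rw [pow_add, evenTailSpan_one_pow hord (by omega) (by omega),
    evenTailSpan_eq_powSpan_of_le (by omega),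
    Submodule.mul_pow_eq_left_of_le_of_one_mem hord (evenTailSpan_le_powSpan 1)
      (one_mem_evenTailSpan (by omega))]

theorem pow_succ_notMem_evenTailSpan (hli : LinearIndependent ℤ fun i : Fin n => a ^ (i : ℕ))
    {k : ℕ} (hk : k + 1 < n) : a ^ (k + 1) ∉ evenTailSpan a n k := by
  classical
  rw [evenTailSpan, Submodule.mem_span_range_iff_exists_fun]
  rintro ⟨c, hc⟩
  have := Fintype.linearIndependent_iffₛ.1 hli (fun i => if (i : ℕ) ≤ k then c i else 2 * c i)
    (Pi.single ⟨k + 1, hk⟩ 1) ?_ ⟨k + 1, hk⟩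
  · simp only [add_le_iff_nonpos_right, nonpos_iff_eq_zero, one_ne_zero, ↓reduceIte,
      Pi.single_eq_same] at this
    omega
  · simp only [Pi.single_apply, ite_smul, one_smul, zero_smul, Finset.sum_ite_eq',
      Finset.mem_univ, if_true, ← hc]
    refine Finset.sum_congr rfl fun i _ => ?_
    split_ifs <;> simp [two_mul, add_mul]

theorem evenTailSpan_lt_succ (hli : LinearIndependent ℤ fun i : Fin n => a ^ (i : ℕ))
    {k : ℕ} (hk : k + 2 ≤ n) : evenTailSpan a n k < evenTailSpan a n (k + 1) :=
  SetLike.lt_iff_le_and_exists.2 ⟨evenTailSpan_mono k.le_succ, _,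
    pow_mem_evenTailSpan (by omega) le_rfl, pow_succ_notMem_evenTailSpan hli (by omega)⟩

theorem evenTailSpan_ne_powSpan (hli : LinearIndependent ℤ fun i : Fin n => a ^ (i : ℕ))
    {k : ℕ} (hk : k + 1 < n) : evenTailSpan a n k ≠ powSpan a n :=
  fun h => pow_succ_notMem_evenTailSpan hli hk (h ▸ pow_mem_powSpan hk)

end EvenTail

theorem stmt_9_general {A : Type*} [CommRing A] [Algebra ℚ A]
    (n : ℕ) (hn : 3 ≤ n) (a : A)
    (hli : LinearIndependent ℚ (fun i : Fin n => a ^ (i : ℕ)))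
    (hord : (Submodule.span ℤ (Set.range fun i : Fin n => a ^ (i : ℕ))) *
            (Submodule.span ℤ (Set.range fun i : Fin n => a ^ (i : ℕ))) ≤
            Submodule.span ℤ (Set.range fun i : Fin n => a ^ (i : ℕ))) :
    let Λ := Submodule.span ℤ (Set.range fun i : Fin n => a ^ (i : ℕ))
    let L := Submodule.span ℤ (Set.range fun i : Fin n =>
      if (i : ℕ) ≤ 1 then a ^ (i : ℕ) else 2 * a ^ (i : ℕ))
    (∀ k, 1 ≤ k → k ≤ n - 2 → L ^ k = Submodule.span ℤ (Set.range fun i : Fin n =>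
      if (i : ℕ) ≤ k then a ^ (i : ℕ) else 2 * a ^ (i : ℕ))) ∧
    L ^ (n - 1) = Λ ∧
    (∀ k, 1 ≤ k → k ≤ n - 2 → L ^ k < L ^ (k + 1) ∧ ¬ IsInvLat (L ^ k)) := by
  intro Λ L
  have hliℤ := hli.restrict_scalars' ℤ
  have hpow : ∀ k, 1 ≤ k → k < n → L ^ k = evenTailSpan a n k :=
    fun k hk hkn => evenTailSpan_one_pow hord hk hkn
  have htop : ∀ m, n - 1 ≤ m → L ^ m = Λ :=
    fun m hm => evenTailSpan_one_pow_eq_powSpan hord (by omega) hm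
  refine ⟨fun k hk hkn => hpow k hk (by omega), htop _ le_rfl, fun k hk hkn => ⟨?_, ?_⟩⟩
  · rw [hpow k hk (by omega), hpow (k + 1) (by omega) (by omega)]
    exact evenTailSpan_lt_succ hliℤ (by omega)
  · refine not_isInvLat_pow hord (one_mem_evenTailSpan (by omega)) hkn (htop _ (by omega)) ?_
    rw [hpow (n - 2) (by omega) (by omega)]
    exact evenTailSpan_ne_powSpan hliℤ (by omega)

theorem stmt_9 {A : Type*} [CommRing A] [Algebra ℚ A] [FiniteDimensional ℚ A]
    (n : ℕ) (hn : 3 ≤ n) (hdim : Module.finrank ℚ A = n) (a : A)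
    (hli : LinearIndependent ℚ (fun i : Fin n => a ^ (i : ℕ)))
    (hord : (Submodule.span ℤ (Set.range fun i : Fin n => a ^ (i : ℕ))) *
            (Submodule.span ℤ (Set.range fun i : Fin n => a ^ (i : ℕ))) ≤
            Submodule.span ℤ (Set.range fun i : Fin n => a ^ (i : ℕ))) :
    let Λ := Submodule.span ℤ (Set.range fun i : Fin n => a ^ (i : ℕ))
    let L := Submodule.span ℤ (Set.range fun i : Fin n =>
      if (i : ℕ) ≤ 1 then a ^ (i : ℕ) else 2 * a ^ (i : ℕ))
    (∀ k, 1 ≤ k → k ≤ n - 2 → L ^ k = Submodule.span ℤ (Set.range fun i : Fin n =>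
      if (i : ℕ) ≤ k then a ^ (i : ℕ) else 2 * a ^ (i : ℕ))) ∧
    L ^ (n - 1) = Λ ∧
    (∀ k, 1 ≤ k → k ≤ n - 2 → L ^ k < L ^ (k + 1) ∧ ¬ IsInvLat (L ^ k)) :=
  stmt_9_general n hn a hli hord
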